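/- Let G be a symmetric positive definite n×n integer matrix, let λ : sh(G) → ℂ satisfy λ(r + x) = exp(πi·xᵀGx)·λ(r) for all r ∈ sh(G) and x ∈ ℤⁿ, and define ϑ_{G,λ}(τ,z) = Σ_{r ∈ sh(G)} λ(r)·exp(πi·τ·rᵀGr + 2πi·rᵀGz). Then ϑ_{G,λ} satisfies the elliptic transformation law of Jacobi forms of index G: for all τ ∈ ℍ, z ∈ ℂⁿ and x, y ∈ ℤⁿ, ϑ_{G,λ}(τ, z + τ·x + y) · exp(πi·τ·xᵀGx + 2πi·xᵀGz) = exp(πi·(x+y)ᵀG(x+y)) · ϑ_{G,λ}(τ, z). -/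
import Mathlib

open Matrix

/-- The shadow of a nondegenerate integral lattice with Gram matrix `G`:
`sh(G) = {r ∈ ℚⁿ : rᵀGx − xᵀGx/2 ∈ ℤ for all x ∈ ℤⁿ}`. -/
def latticeShadow {n : ℕ} (G : Matrix (Fin n) (Fin n) ℤ) : Set (Fin n → ℚ) :=
  {r | ∀ x : Fin n → ℤ, ∃ m : ℤ,
    r ⬝ᵥ (G.map (Int.cast : ℤ → ℚ)).mulVec (fun i => (x i : ℚ))
      - ((fun i => (x i : ℚ)) ⬝ᵥ (G.map (Int.cast : ℤ → ℚ)).mulVec (fun i => (x i : ℚ))) / 2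
      = (m : ℚ)}

/-- The basic theta function `ϑ_{G,λ}(τ,z) = Σ_{r ∈ sh(G)} λ(r)·e(τ·β(r) + β(r,z))`
attached to a coefficient function `λ`. -/
noncomputable def thetaFun {n : ℕ} (G : Matrix (Fin n) (Fin n) ℤ)
    (lam : (Fin n → ℚ) → ℂ) (τ : ℂ) (z : Fin n → ℂ) : ℂ :=
  ∑' r : latticeShadow G,
    lam (r : Fin n → ℚ) *
      Complex.exp ((Real.pi : ℂ) * Complex.I * τ *
          ((((r : Fin n → ℚ) ⬝ᵥ (G.map (Int.cast : ℤ → ℚ)).mulVec (r : Fin n → ℚ)) : ℚ) : ℂ)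
        + 2 * (Real.pi : ℂ) * Complex.I *
          ((fun i => (((r : Fin n → ℚ)) i : ℂ)) ⬝ᵥ (G.map (Int.cast : ℤ → ℂ)).mulVec z))

namespace ThetaAux

variable {n : ℕ}

noncomputable def cq (r : Fin n → ℚ) : Fin n → ℂ := fun i => (r i : ℂ)
def cz (x : Fin n → ℤ) : Fin n → ℂ := fun i => (x i : ℂ)
def qz (x : Fin n → ℤ) : Fin n → ℚ := fun i => (x i : ℚ)

noncomputable def Bc (G : Matrix (Fin n) (Fin n) ℤ) (u v : Fin n → ℂ) : ℂ :=
  u ⬝ᵥ (G.map (Int.cast : ℤ → ℂ)).mulVec v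

variable (G : Matrix (Fin n) (Fin n) ℤ)

lemma Bc_add_left (u v w : Fin n → ℂ) : Bc G (u + v) w = Bc G u w + Bc G v w := by
  simp [Bc, add_dotProduct]

lemma Bc_add_right (u v w : Fin n → ℂ) : Bc G u (v + w) = Bc G u v + Bc G u w := by
  simp [Bc, mulVec_add, dotProduct_add]

lemma Bc_smul_right (c : ℂ) (u v : Fin n → ℂ) : Bc G u (c • v) = c * Bc G u v := by
  simp [Bc, mulVec_smul, dotProduct_smul, smul_eq_mul]

lemma Bc_symm (hG : G.IsSymm) (u v : Fin n → ℂ) : Bc G u v = Bc G v u := by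
  have hs : (G.map (Int.cast : ℤ → ℂ)).IsSymm := hG.map _
  rw [Bc, Bc, dotProduct_mulVec, ← mulVec_transpose, hs, dotProduct_comm]

lemma cast_qq (r s : Fin n → ℚ) :
    ((r ⬝ᵥ (G.map (Int.cast : ℤ → ℚ)).mulVec s : ℚ) : ℂ) = Bc G (cq r) (cq s) := by
  have h := RingHom.map_dotProduct (Rat.castHom ℂ) r ((G.map (Int.cast : ℤ → ℚ)).mulVec s)
  rw [show ((r ⬝ᵥ (G.map (Int.cast : ℤ → ℚ)).mulVec s : ℚ) : ℂ)
      = (Rat.castHom ℂ) (r ⬝ᵥ (G.map (Int.cast : ℤ → ℚ)).mulVec s) from rfl, h, Bc]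
  congr 1
  funext i
  rw [Function.comp_apply, RingHom.map_mulVec]
  · rfl

lemma cast_zz (x s : Fin n → ℤ) :
    ((x ⬝ᵥ G.mulVec s : ℤ) : ℂ) = Bc G (cz x) (cz s) := by
  have h := RingHom.map_dotProduct (Int.castRingHom ℂ) x (G.mulVec s)
  rw [show ((x ⬝ᵥ G.mulVec s : ℤ) : ℂ) = (Int.castRingHom ℂ) (x ⬝ᵥ G.mulVec s) from rfl, h, Bc]
  congr 1
  funext i
  rw [Function.comp_apply, RingHom.map_mulVec]
  rfl

lemma cast_zq (x s : Fin n → ℤ) :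
    (qz x) ⬝ᵥ (G.map (Int.cast : ℤ → ℚ)).mulVec (qz s) = ((x ⬝ᵥ G.mulVec s : ℤ) : ℚ) := by
  have h := RingHom.map_dotProduct (Int.castRingHom ℚ) x (G.mulVec s)
  rw [show ((x ⬝ᵥ G.mulVec s : ℤ) : ℚ) = (Int.castRingHom ℚ) (x ⬝ᵥ G.mulVec s) from rfl, h]
  congr 1
  funext i
  rw [Function.comp_apply, RingHom.map_mulVec]
  rfl

lemma cq_add (r : Fin n → ℚ) (x : Fin n → ℤ) : cq (r + qz x) = cq r + cz x := by
  funext i; simp [cq, cz, qz]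

lemma cq_qz (x : Fin n → ℤ) : cq (qz x) = cz x := by
  funext i; simp [cq, cz, qz]

lemma cz_add (x s : Fin n → ℤ) : cz (x + s) = cz x + cz s := by
  funext i; simp [cz]

lemma shadow_add {r : Fin n → ℚ} (hr : r ∈ latticeShadow G) (x : Fin n → ℤ) :
    r + qz x ∈ latticeShadow G := by
  intro w
  obtain ⟨m, hm⟩ := hr w
  refine ⟨m + x ⬝ᵥ G.mulVec w, ?_⟩
  have h0 : (fun i => ((w i : ℚ))) = qz w := rfl
  rw [add_dotProduct]
  push_cast
  rw [← hm, h0, cast_zq]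
  ring

noncomputable def shadowShift (x : Fin n → ℤ) : latticeShadow G ≃ latticeShadow G where
  toFun r := ⟨(r : Fin n → ℚ) + qz x, shadow_add G r.2 x⟩
  invFun r := ⟨(r : Fin n → ℚ) + qz (-x), shadow_add G r.2 (-x)⟩
  left_inv r := by
    ext1; show (r : Fin n → ℚ) + qz x + qz (-x) = r
    funext i; simp [qz]
  right_inv r := by
    ext1; show (r : Fin n → ℚ) + qz (-x) + qz x = r
    funext i; simp [qz]

lemma key_alg (τ Brr Brx Brz Byy Bxz l : ℂ) (a b m : ℤ) :
    (l * Complex.exp ((Real.pi : ℂ) * Complex.I * τ * Brr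
        + 2 * (Real.pi : ℂ) * Complex.I * (Brz + τ * Brx + (Byy / 2 + (m : ℂ)))))
      * Complex.exp ((Real.pi : ℂ) * Complex.I * τ * (a : ℂ)
        + 2 * (Real.pi : ℂ) * Complex.I * Bxz)
    = Complex.exp ((Real.pi : ℂ) * Complex.I * ((a : ℂ) + 2 * (b : ℂ) + Byy)) *
        (Complex.exp ((Real.pi : ℂ) * Complex.I * (a : ℂ)) * l *
          Complex.exp ((Real.pi : ℂ) * Complex.I * τ * (Brr + 2 * Brx + (a : ℂ))
            + 2 * (Real.pi : ℂ) * Complex.I * (Brz + Bxz))) := by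
  set E1 := (Real.pi : ℂ) * Complex.I * τ * Brr
        + 2 * (Real.pi : ℂ) * Complex.I * (Brz + τ * Brx + (Byy / 2 + (m : ℂ))) with hE1
  set E2 := (Real.pi : ℂ) * Complex.I * τ * (a : ℂ)
        + 2 * (Real.pi : ℂ) * Complex.I * Bxz with hE2
  set P1 := (Real.pi : ℂ) * Complex.I * ((a : ℂ) + 2 * (b : ℂ) + Byy) with hP1
  set P2 := (Real.pi : ℂ) * Complex.I * (a : ℂ) with hP2
  set P3 := (Real.pi : ℂ) * Complex.I * τ * (Brr + 2 * Brx + (a : ℂ))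
        + 2 * (Real.pi : ℂ) * Complex.I * (Brz + Bxz) with hP3
  have h1 : l * Complex.exp E1 * Complex.exp E2 = l * Complex.exp (E1 + E2) := by
    rw [Complex.exp_add E1 E2]; ring
  have h2 : Complex.exp P1 * (Complex.exp P2 * l * Complex.exp P3)
      = l * Complex.exp (P1 + P2 + P3) := by
    rw [Complex.exp_add (P1 + P2) P3, Complex.exp_add P1 P2]; ring
  rw [h1, h2]
  congr 1
  rw [show E1 + E2 = (P1 + P2 + P3) + ((m - a - b : ℤ) : ℂ) * (2 * ((Real.pi : ℝ) : ℂ) * Complex.I) from by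
      rw [hE1, hE2, hP1, hP2, hP3]; push_cast; ring,
    Complex.exp_add, Complex.exp_int_mul_two_pi_mul_I, mul_one]

end ThetaAux

open ThetaAux in
theorem theta_function_elliptic_transformation
    {n : ℕ} (G : Matrix (Fin n) (Fin n) ℤ) (hG : G.IsSymm)
    (hpos : ∀ v : Fin n → ℝ, v ≠ 0 → 0 < v ⬝ᵥ (G.map (Int.cast : ℤ → ℝ)).mulVec v)
    (lam : (Fin n → ℚ) → ℂ)
    (hlam : ∀ r ∈ latticeShadow G, ∀ x : Fin n → ℤ,
      lam (r + fun i => (x i : ℚ)) =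
        Complex.exp ((Real.pi : ℂ) * Complex.I * (((x ⬝ᵥ G.mulVec x) : ℤ) : ℂ)) * lam r) :
    ∀ (τ : ℂ), 0 < τ.im → ∀ (z : Fin n → ℂ) (x y : Fin n → ℤ),
      thetaFun G lam τ (z + τ • (fun i => (x i : ℂ)) + (fun i => (y i : ℂ))) *
          Complex.exp ((Real.pi : ℂ) * Complex.I * τ * (((x ⬝ᵥ G.mulVec x) : ℤ) : ℂ)
            + 2 * (Real.pi : ℂ) * Complex.I *
              ((fun i => (x i : ℂ)) ⬝ᵥ (G.map (Int.cast : ℤ → ℂ)).mulVec z)) =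
        Complex.exp ((Real.pi : ℂ) * Complex.I *
            ((((x + y) ⬝ᵥ G.mulVec (x + y)) : ℤ) : ℂ)) * thetaFun G lam τ z := by
  intro τ hτ z x y
  simp only [thetaFun]
  rw [← tsum_mul_right, ← tsum_mul_left]
  refine Eq.trans (tsum_congr ?_)
    (Equiv.tsum_eq (shadowShift G x)
      (fun s : latticeShadow G =>
        Complex.exp ((Real.pi : ℂ) * Complex.I *
            ((((x + y) ⬝ᵥ G.mulVec (x + y)) : ℤ) : ℂ)) *
          (lam (s : Fin n → ℚ) *
            Complex.exp ((Real.pi : ℂ) * Complex.I * τ *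
                ((((s : Fin n → ℚ) ⬝ᵥ (G.map (Int.cast : ℤ → ℚ)).mulVec (s : Fin n → ℚ)) : ℚ) : ℂ)
              + 2 * (Real.pi : ℂ) * Complex.I *
                ((fun i => (((s : Fin n → ℚ)) i : ℂ)) ⬝ᵥ (G.map (Int.cast : ℤ → ℂ)).mulVec z)))))
  intro r
  obtain ⟨m, hm⟩ := r.2 y
  -- complexified shadow relation
  have hmC : Bc G (cq (r : Fin n → ℚ)) (cz y) = Bc G (cz y) (cz y) / 2 + (m : ℂ) := by
    have h := congrArg (fun q : ℚ => (q : ℂ)) hm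
    push_cast at h
    rw [show (fun i => ((y i : ℚ))) = qz y from rfl] at h
    rw [cast_qq, cast_qq, cq_qz] at h
    linear_combination h
  have hcoe : ((shadowShift G x r : latticeShadow G) : Fin n → ℚ) = (r : Fin n → ℚ) + qz x := rfl
  have hlam' := hlam (r : Fin n → ℚ) r.2 x
  rw [show ((r : Fin n → ℚ) + fun i => ((x i : ℚ))) = (r : Fin n → ℚ) + qz x from rfl] at hlam'
  -- rewrite dot products into Bc form
  have hd1 : ((fun i => (((r : Fin n → ℚ)) i : ℂ)) ⬝ᵥ (G.map (Int.cast : ℤ → ℂ)).mulVec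
      (z + τ • (fun i => (x i : ℂ)) + (fun i => (y i : ℂ))))
      = Bc G (cq (r : Fin n → ℚ)) z + τ * Bc G (cq (r : Fin n → ℚ)) (cz x)
        + (Bc G (cz y) (cz y) / 2 + (m : ℂ)) := by
    rw [show ((fun i => (((r : Fin n → ℚ)) i : ℂ)) ⬝ᵥ (G.map (Int.cast : ℤ → ℂ)).mulVec
        (z + τ • (fun i => (x i : ℂ)) + (fun i => (y i : ℂ))))
      = Bc G (cq (r : Fin n → ℚ)) (z + τ • cz x + cz y) from rfl]
    rw [Bc_add_right, Bc_add_right, Bc_smul_right, hmC]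
  have hd2 : ((((r : Fin n → ℚ) + qz x) ⬝ᵥ (G.map (Int.cast : ℤ → ℚ)).mulVec
      ((r : Fin n → ℚ) + qz x) : ℚ) : ℂ)
      = Bc G (cq (r : Fin n → ℚ)) (cq (r : Fin n → ℚ))
        + 2 * Bc G (cq (r : Fin n → ℚ)) (cz x) + ((x ⬝ᵥ G.mulVec x : ℤ) : ℂ) := by
    rw [cast_qq, cq_add, Bc_add_left, Bc_add_right, Bc_add_right,
      Bc_symm G hG (cz x) (cq (r : Fin n → ℚ)), cast_zz]
    ring
  have hd3 : ((fun i => ((((r : Fin n → ℚ) + qz x)) i : ℂ)) ⬝ᵥ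
      (G.map (Int.cast : ℤ → ℂ)).mulVec z)
      = Bc G (cq (r : Fin n → ℚ)) z + Bc G (cz x) z := by
    rw [show ((fun i => ((((r : Fin n → ℚ) + qz x)) i : ℂ)) ⬝ᵥ
        (G.map (Int.cast : ℤ → ℂ)).mulVec z) = Bc G (cq ((r : Fin n → ℚ) + qz x)) z from rfl,
      cq_add, Bc_add_left]
  have hd4 : (((x + y) ⬝ᵥ G.mulVec (x + y) : ℤ) : ℂ)
      = ((x ⬝ᵥ G.mulVec x : ℤ) : ℂ) + 2 * ((x ⬝ᵥ G.mulVec y : ℤ) : ℂ) + Bc G (cz y) (cz y) := by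
    rw [cast_zz, cast_zz, cast_zz, cz_add, Bc_add_left, Bc_add_right, Bc_add_right,
      Bc_symm G hG (cz y) (cz x)]
    ring
  have hd5 : ((fun i => (x i : ℂ)) ⬝ᵥ (G.map (Int.cast : ℤ → ℂ)).mulVec z) = Bc G (cz x) z := rfl
  have hd6 : ((((r : Fin n → ℚ)) ⬝ᵥ (G.map (Int.cast : ℤ → ℚ)).mulVec ((r : Fin n → ℚ)) : ℚ) : ℂ)
      = Bc G (cq (r : Fin n → ℚ)) (cq (r : Fin n → ℚ)) := cast_qq G _ _
  simp only [hcoe, hd1, hd2, hd3, hd4, hd5, hd6, hlam']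
  have := key_alg τ (Bc G (cq (r : Fin n → ℚ)) (cq (r : Fin n → ℚ)))
    (Bc G (cq (r : Fin n → ℚ)) (cz x)) (Bc G (cq (r : Fin n → ℚ)) z)
    (Bc G (cz y) (cz y)) (Bc G (cz x) z) (lam (r : Fin n → ℚ))
    (x ⬝ᵥ G.mulVec x) (x ⬝ᵥ G.mulVec y) m
  exact this
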